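/- arXiv:1904.09808 — 4 statements merged into one kernel-verified Lean document; each statement's English description precedes it below -/
import Mathlib

section
/- Let \(\bar{\gamma} > 0\) and \(\kappa : (0,\bar{\gamma}] \to \mathbb{R}\) with \(\kappa(\gamma) < 0\) and \(\gamma\kappa(\gamma) > -1\) for all \(\gamma \in (0,\bar{\gamma}]\). Then for any \(\ell \in \mathbb{N}^*\) and \(\gamma \in (0,\bar{\gamma}]\), \(\gamma\sum_{k=1}^{\ell\lceil 1/\gamma\rceil}(1+\gamma\kappa(\gamma))^{-k} \geq -\kappa(\gamma)^{-1}[\exp(-\ell\kappa(\gamma)) - 1]\). -/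
/-!
With `a = 1 + γ κ(γ) ∈ (0, 1)` the sum is geometric in `a⁻¹`, and summing it gives exactly
`-κ(γ)⁻¹ (a⁻ⁿ - 1)` with `n = ℓ ⌈1/γ⌉`. Since `a ≤ exp (γ κ(γ))` and `n γ ≥ ℓ`, we get
`a⁻ⁿ ≥ exp (-n γ κ(γ)) ≥ exp (-ℓ κ(γ))`.
-/

open Real Set

theorem sum_Icc_zpow_neg_eq {K : Type*} [Field K] {a : K} (ha : a ≠ 0) (ha1 : a ≠ 1) (n : ℕ) :
    ∑ k ∈ Finset.Icc 1 n, a ^ (-(k : ℤ)) = (a⁻¹ ^ n - 1) / (1 - a) := by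
  have hinv1 : a⁻¹ ≠ 1 := inv_ne_one.mpr ha1
  simp only [zpow_neg, zpow_natCast, ← inv_pow]
  rw [← Finset.Ico_add_one_right_eq_Icc, geom_sum_Ico hinv1 (Nat.le_add_left 1 n), pow_succ,
    pow_one]
  field_simp

theorem exp_neg_mul_le_inv_one_add_pow {x : ℝ} (hx : -1 < x) (n : ℕ) :
    exp (-(n * x)) ≤ (1 + x)⁻¹ ^ n := by
  have hexp : exp (-x) ≤ (1 + x)⁻¹ := by
    rw [exp_neg]
    exact inv_anti₀ (by linarith) (by linarith [add_one_le_exp x])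
  calc exp (-(n * x)) = exp (-x) ^ n := by rw [← exp_nat_mul]; ring_nf
    _ ≤ (1 + x)⁻¹ ^ n := pow_le_pow_left₀ (exp_nonneg _) hexp n

theorem xi_lower_bound_neg_general (γbar : ℝ) (κ : ℝ → ℝ)
    (hκneg : ∀ γ ∈ Set.Ioc (0:ℝ) γbar, κ γ < 0)
    (hκ : ∀ γ ∈ Set.Ioc (0:ℝ) γbar, -1 < γ * κ γ)
    (ℓ : ℕ) (γ : ℝ) (hγ : γ ∈ Set.Ioc (0:ℝ) γbar) :
    γ * ∑ k ∈ Finset.Icc 1 (ℓ * ⌈1/γ⌉₊), (1 + γ * κ γ) ^ (-(k : ℤ))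
      ≥ -(κ γ)⁻¹ * (Real.exp (-(ℓ : ℝ) * κ γ) - 1) := by
  have hγ0 : 0 < γ := hγ.1
  have hκγ : κ γ < 0 := hκneg γ hγ
  have hγκ : -1 < γ * κ γ := hκ γ hγ
  set n := ℓ * ⌈1/γ⌉₊
  have hn : (ℓ : ℝ) ≤ n * γ := by
    have : 1 ≤ (⌈1/γ⌉₊ : ℝ) * γ := (div_le_iff₀ hγ0).mp (Nat.le_ceil _)
    push_cast [n]
    nlinarith [(Nat.cast_nonneg ℓ : (0 : ℝ) ≤ ℓ)]
  have hsum : γ * ∑ k ∈ Finset.Icc 1 n, (1 + γ * κ γ) ^ (-(k : ℤ))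
      = -(κ γ)⁻¹ * ((1 + γ * κ γ)⁻¹ ^ n - 1) := by
    have hγne : γ ≠ 0 := hγ0.ne'
    have hκne : κ γ ≠ 0 := hκγ.ne
    rw [sum_Icc_zpow_neg_eq (by linarith) (by nlinarith)]
    field_simp
    ring
  have hexp : exp (-(ℓ : ℝ) * κ γ) ≤ (1 + γ * κ γ)⁻¹ ^ n :=
    calc exp (-(ℓ : ℝ) * κ γ) ≤ exp (-(n * (γ * κ γ))) := exp_le_exp.mpr (by nlinarith)
      _ ≤ (1 + γ * κ γ)⁻¹ ^ n := exp_neg_mul_le_inv_one_add_pow hγκ n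
  rw [hsum, ge_iff_le]
  have hcoef : 0 ≤ -(κ γ)⁻¹ := by simpa using hκγ.le
  gcongr

/-- lower bound on the geometric sum when `κ(γ) < 0`. -/
theorem xi_lower_bound_neg (γbar : ℝ) (hγbar : 0 < γbar) (κ : ℝ → ℝ)
    (hκneg : ∀ γ ∈ Set.Ioc (0:ℝ) γbar, κ γ < 0)
    (hκ : ∀ γ ∈ Set.Ioc (0:ℝ) γbar, -1 < γ * κ γ)
    (ℓ : ℕ) (hℓ : 1 ≤ ℓ) (γ : ℝ) (hγ : γ ∈ Set.Ioc (0:ℝ) γbar) :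
    γ * ∑ k ∈ Finset.Icc 1 (ℓ * ⌈1/γ⌉₊), (1 + γ * κ γ) ^ (-(k : ℤ))
      ≥ -(κ γ)⁻¹ * (Real.exp (-(ℓ : ℝ) * κ γ) - 1) :=
  xi_lower_bound_neg_general γbar κ hκneg hκ ℓ γ hγ
end

section
/- Let \(\bar{\gamma} > 0\) and \(\kappa : (0,\bar{\gamma}] \to \mathbb{R}\) with \(\kappa(\gamma) > 0\) for all \(\gamma \in (0,\bar{\gamma}]\). Then for any \(\ell \in \mathbb{N}^*\) and \(\gamma \in (0,\bar{\gamma}]\), \(\gamma\sum_{k=1}^{\ell\lceil 1/\gamma\rceil}(1+\gamma\kappa(\gamma))^{-k} \geq \kappa(\gamma)^{-1}[1 - \exp(-\ell\kappa(\gamma)/(1+\gamma\kappa(\gamma)))]\). -/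
open Real Set Finset

/-!
With `q = 1 + γκ` the sum is geometric, so `γ ∑_{k=1}^N q^{-k} = κ⁻¹ (1 - q^{-N})` for
`N = ℓ⌈1/γ⌉`. It remains to bound `q^{-N} = exp(-N log q)` from above: by `log q ≥ 1 - q⁻¹ = γκ/q`
and `Nγ ≥ ℓ`, we get `N log q ≥ ℓκ/q`.
-/

theorem sum_Icc_zpow_neg_mul_sub_one {K : Type*} [Field K] {q : K} (hq : q ≠ 0) (N : ℕ) :
    (∑ k ∈ Icc 1 N, q ^ (-(k : ℤ))) * (q - 1) = 1 - q ^ (-(N : ℤ)) := by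
  induction N with
  | zero => simp
  | succ N ih =>
    rw [sum_Icc_succ_top (Nat.le_add_left 1 N), add_mul, ih]
    simp only [Nat.cast_succ, neg_add, zpow_add₀ hq, zpow_neg_one]
    field_simp
    ring

theorem zpow_neg_natCast_le_exp {q : ℝ} (hq : 0 < q) (N : ℕ) :
    q ^ (-(N : ℤ)) ≤ exp (-(N * (1 - q⁻¹))) := by
  rw [← exp_log (zpow_pos hq _), exp_le_exp, log_zpow, Int.cast_neg, Int.cast_natCast, neg_mul,
    neg_le_neg_iff]
  exact mul_le_mul_of_nonneg_left (one_sub_inv_le_log_of_pos hq) N.cast_nonneg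

theorem natCast_le_mul_ceil_inv_mul {γ : ℝ} (hγ : 0 < γ) (ℓ : ℕ) :
    (ℓ : ℝ) ≤ ((ℓ * ⌈1 / γ⌉₊ : ℕ) : ℝ) * γ := by
  have hceil : 1 ≤ (⌈1 / γ⌉₊ : ℝ) * γ := by
    rw [← div_le_iff₀ hγ]
    exact Nat.le_ceil _
  push_cast
  rw [mul_assoc]
  exact le_mul_of_one_le_right ℓ.cast_nonneg hceil

theorem xi_lower_bound_pos_general (γbar : ℝ) (κ : ℝ → ℝ)
    (hκpos : ∀ γ ∈ Set.Ioc (0:ℝ) γbar, 0 < κ γ)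
    (ℓ : ℕ) (γ : ℝ) (hγ : γ ∈ Set.Ioc (0:ℝ) γbar) :
    γ * ∑ k ∈ Finset.Icc 1 (ℓ * ⌈1/γ⌉₊), (1 + γ * κ γ) ^ (-(k : ℤ))
      ≥ (κ γ)⁻¹ * (1 - Real.exp (-(ℓ : ℝ) * κ γ / (1 + γ * κ γ))) := by
  have hκ : 0 < κ γ := hκpos γ hγ
  have hγκ : 0 < γ * κ γ := mul_pos hγ.1 hκ
  set N := ℓ * ⌈1/γ⌉₊
  set q := 1 + γ * κ γ
  have hq : 0 < q := by positivity
  have hsum : γ * ∑ k ∈ Icc 1 N, q ^ (-(k : ℤ)) = (κ γ)⁻¹ * (1 - q ^ (-(N : ℤ))) := by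
    rw [← sum_Icc_zpow_neg_mul_sub_one hq.ne' N]
    simp only [q, add_sub_cancel_left]
    field_simp
  have hexponent : (ℓ : ℝ) * κ γ / q ≤ N * (1 - q⁻¹) := by
    rw [show 1 - q⁻¹ = γ * κ γ / q by field_simp; ring, mul_div_assoc', ← mul_assoc]
    gcongr
    exact natCast_le_mul_ceil_inv_mul hγ.1 ℓ
  have hpow : q ^ (-(N : ℤ)) ≤ exp (-(ℓ : ℝ) * κ γ / q) := by
    refine (zpow_neg_natCast_le_exp hq N).trans (exp_le_exp.2 ?_)
    rw [neg_mul, neg_div]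
    exact neg_le_neg hexponent
  rw [hsum, ge_iff_le]
  gcongr

/-- lower bound on the geometric sum when `κ(γ) > 0`. -/
theorem xi_lower_bound_pos (γbar : ℝ) (hγbar : 0 < γbar) (κ : ℝ → ℝ)
    (hκpos : ∀ γ ∈ Set.Ioc (0:ℝ) γbar, 0 < κ γ)
    (ℓ : ℕ) (hℓ : 1 ≤ ℓ) (γ : ℝ) (hγ : γ ∈ Set.Ioc (0:ℝ) γbar) :
    γ * ∑ k ∈ Finset.Icc 1 (ℓ * ⌈1/γ⌉₊), (1 + γ * κ γ) ^ (-(k : ℤ))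
      ≥ (κ γ)⁻¹ * (1 - Real.exp (-(ℓ : ℝ) * κ γ / (1 + γ * κ γ))) :=
  xi_lower_bound_pos_general γbar κ hκpos ℓ γ hγ
end

section
/- For any real numbers \(a \geq b \geq 0\), any \(t \geq 0\) and any integer \(p \geq 1\): \((1+ta)^p - (1+tb)^p \leq t\{\max(1,t)^p(1+a)^p - b\}\). -/
/-!
Since `1 + t b ≥ 1`, we have `(1 + t b)^p ≥ 1 + t b`, so `b` cancels and it suffices to show
`(1 + t a)^p ≤ 1 + t max(1,t)^p (1 + a)^p`. For `t ≤ 1` this is convexity of `x ↦ x^p` on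
`[0, ∞)`, since `1 + t a` is the convex combination `(1 - t) • 1 + t • (1 + a)`; for `t ≥ 1` it
follows from `1 + t a ≤ t (1 + a)`.
-/

lemma one_add_mul_pow_le_of_le_one {t x : ℝ} (p : ℕ) (ht₀ : 0 ≤ t) (ht₁ : t ≤ 1)
    (hx : 0 ≤ 1 + x) : (1 + t * x) ^ p ≤ 1 - t + t * (1 + x) ^ p := by
  have hconv := (convexOn_pow p).2 (Set.mem_Ici.2 zero_le_one) (Set.mem_Ici.2 hx)
    (sub_nonneg.2 ht₁) ht₀ (sub_add_cancel 1 t)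
  simp only [smul_eq_mul, one_pow, mul_one] at hconv
  calc (1 + t * x) ^ p = (1 - t + t * (1 + x)) ^ p := by ring
    _ ≤ 1 - t + t * (1 + x) ^ p := hconv

lemma one_add_mul_pow_le_of_one_le {t a : ℝ} (p : ℕ) (ht : 1 ≤ t) (ha : 0 ≤ a) :
    (1 + t * a) ^ p ≤ t ^ p * (1 + a) ^ p := by
  rw [← mul_pow]
  exact pow_le_pow_left₀ (by positivity) (by nlinarith) p

lemma one_add_mul_pow_le {t a : ℝ} (p : ℕ) (ht : 0 ≤ t) (ha : 0 ≤ a) :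
    (1 + t * a) ^ p ≤ 1 + t * (max 1 t ^ p * (1 + a) ^ p) := by
  rcases le_total t 1 with ht₁ | ht₁
  · rw [max_eq_left ht₁, one_pow, one_mul]
    linarith [one_add_mul_pow_le_of_le_one p ht ht₁ (by linarith : 0 ≤ 1 + a)]
  · rw [max_eq_right ht₁]
    have hpos : 0 ≤ t ^ p * (1 + a) ^ p := by positivity
    calc (1 + t * a) ^ p ≤ t ^ p * (1 + a) ^ p := one_add_mul_pow_le_of_one_le p ht₁ ha
      _ ≤ t * (t ^ p * (1 + a) ^ p) := le_mul_of_one_le_left hpos ht₁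
      _ ≤ 1 + t * (t ^ p * (1 + a) ^ p) := le_add_of_nonneg_left zero_le_one

/-- elementary inequality (74). -/
theorem pow_comparison_ineq (a b t : ℝ) (p : ℕ) (hba : b ≤ a) (hb : 0 ≤ b)
    (ht : 0 ≤ t) (hp : 1 ≤ p) :
    (1 + t * a) ^ p - (1 + t * b) ^ p ≤ t * (max 1 t ^ p * (1 + a) ^ p - b) := by
  have hself : 1 + t * b ≤ (1 + t * b) ^ p :=
    le_self_pow₀ (le_add_of_nonneg_right (mul_nonneg ht hb)) (Nat.one_le_iff_ne_zero.1 hp)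
  have hkey := one_add_mul_pow_le p ht (hb.trans hba)
  linarith
end

section
/- Let \(b : \mathbb{R}^d \to \mathbb{R}^d\) be L-Lipschitz with \(b(0)=0\), satisfying \(\langle b(x), x\rangle \leq -\mathfrak{m}_2^+\|x\|^2\) for \(\|x\| > R_2\) (with \(\mathfrak{m}_2^+ > 0\)) and \(\langle b(x)-b(y),x-y\rangle \leq -\mathfrak{m}\|x-y\|^2\) with \(\mathfrak{m} \leq 0\). Let \(\gamma \in (0, 2\mathfrak{m}_2^+/L^2)\), \(V(x) = 1+\|x\|^2\), and let Z be a d-dimensional standard Gaussian. Then \(\mathbb{E}[V(x+\gamma b(x)+\sqrt{\gamma}Z)] \leq (1-\gamma(2\mathfrak{m}_2^+-\gamma L^2))V(x) + \gamma(d + 2R_2^2(\mathfrak{m}_2^+-\mathfrak{m}) + 2\mathfrak{m}_2^+)\) for all \(x \in \mathbb{R}^d\). -/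
open Real MeasureTheory ProbabilityTheory
open scoped RealInnerProductSpace

/-!
Averaging over the Gaussian noise gives `E‖c + √γ Z‖² = ‖c‖² + γ d` with `c = x + γ b(x)`.
Inside the ball of radius `R₂` the one-sided Lipschitz bound at `y = 0` gives
`⟪b x, x⟫ ≤ -m ‖x‖² ≤ -m₂ ‖x‖² + R₂² (m₂ - m)`, and outside it the dissipativity
hypothesis gives the same bound, so it holds everywhere. Together with `‖b x‖ ≤ L ‖x‖` this bounds
`‖x + γ b(x)‖²`, and the claimed bound exceeds the result by `γ² L² ≥ 0`.
-/

/-- The standard `d`-dimensional Gaussian measure on `EuclideanSpace ℝ (Fin d)`. -/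
noncomputable def stdGaussian (d : ℕ) : Measure (EuclideanSpace ℝ (Fin d)) :=
  (Measure.pi fun _ : Fin d => gaussianReal 0 1).map
    ⇑(EuclideanSpace.equiv (Fin d) ℝ).symm

section SecondMoment

variable {E : Type*} [NormedAddCommGroup E] [InnerProductSpace ℝ E] [MeasurableSpace E]
  {μ : Measure E} [IsProbabilityMeasure μ]

lemma integrable_norm_add_smul_sq (h : MemLp id 2 μ) (c : E) (s : ℝ) :
    Integrable (fun z => ‖c + s • z‖ ^ 2) μ :=
  ((memLp_const c).add (h.const_smul s)).integrable_norm_pow two_ne_zero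

variable [CompleteSpace E]

lemma integral_norm_add_smul_sq (h : MemLp id 2 μ) (c : E) (s : ℝ) :
    ∫ z, ‖c + s • z‖ ^ 2 ∂μ =
      ‖c‖ ^ 2 + 2 * s * ⟪c, ∫ z, z ∂μ⟫ + s ^ 2 * ∫ z, ‖z‖ ^ 2 ∂μ := by
  have hid : Integrable (fun z : E => z) μ := h.integrable one_le_two
  have hinner : Integrable (fun z => 2 * (s * ⟪c, z⟫)) μ :=
    ((hid.const_inner c).const_mul s).const_mul 2
  have hsq : Integrable (fun z : E => s ^ 2 * ‖z‖ ^ 2) μ :=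
    (h.integrable_norm_pow two_ne_zero).const_mul _
  simp_rw [norm_add_sq_real, inner_smul_right, norm_smul, mul_pow, Real.norm_eq_abs, sq_abs]
  have hconst : Integrable (fun _ : E => ‖c‖ ^ 2) μ := integrable_const _
  rw [integral_add (f := fun z => ‖c‖ ^ 2 + 2 * (s * ⟪c, z⟫)) (hconst.add hinner) hsq, integral_add hconst hinner,
    integral_const, integral_const_mul, integral_const_mul, integral_const_mul,
    integral_inner hid c, probReal_univ, one_smul, mul_assoc]

end SecondMoment

section StdGaussian

variable {E : Type*} [NormedAddCommGroup E] [InnerProductSpace ℝ E] [FiniteDimensional ℝ E]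
  [MeasurableSpace E] [BorelSpace E]

lemma integral_norm_sq_stdGaussian :
    ∫ z, ‖z‖ ^ 2 ∂(ProbabilityTheory.stdGaussian E) = Module.finrank ℝ E := by
  set e := stdOrthonormalBasis ℝ E
  have h : MemLp (fun z : E => z) 2 (ProbabilityTheory.stdGaussian E) := IsGaussian.memLp_two_id
  have hcoord (i) : ∫ z, ⟪e i, z⟫ ^ 2 ∂(ProbabilityTheory.stdGaussian E) = 1 := by
    have := covarianceBilin_apply h (e i) (e i)
    rw [covarianceBilin_stdGaussian] at this
    simpa [sq, innerSL_apply_apply ℝ, real_inner_self_eq_norm_sq, e.orthonormal.1 i]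
      using this.symm
  simp_rw [← e.sum_sq_inner_right]
  rw [integral_finsetSum _ fun i _ => (h.const_inner (e i)).integrable_sq]
  simp [hcoord]

lemma integral_norm_add_smul_sq_stdGaussian (c : E) (s : ℝ) :
    ∫ z, ‖c + s • z‖ ^ 2 ∂(ProbabilityTheory.stdGaussian E) =
      ‖c‖ ^ 2 + s ^ 2 * Module.finrank ℝ E := by
  rw [integral_norm_add_smul_sq IsGaussian.memLp_two_id, integral_id_stdGaussian,
    integral_norm_sq_stdGaussian, inner_zero_right, mul_zero, add_zero]

end StdGaussian

lemma stdGaussian_eq_stdGaussian_euclideanSpace (d : ℕ) :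
    _root_.stdGaussian d = ProbabilityTheory.stdGaussian (EuclideanSpace ℝ (Fin d)) :=
  map_pi_eq_stdGaussian

lemma integral_one_add_norm_add_smul_sq_stdGaussian (d : ℕ) (c : EuclideanSpace ℝ (Fin d))
    (s : ℝ) : ∫ z, (1 + ‖c + s • z‖ ^ 2) ∂(_root_.stdGaussian d) = 1 + ‖c‖ ^ 2 + s ^ 2 * d := by
  rw [stdGaussian_eq_stdGaussian_euclideanSpace, integral_add (integrable_const _)
    (integrable_norm_add_smul_sq IsGaussian.memLp_two_id c s), integral_const, probReal_univ,
    one_smul, integral_norm_add_smul_sq_stdGaussian, finrank_euclideanSpace_fin, add_assoc]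

lemma inner_le_neg_mul_norm_sq_add {E : Type*} [NormedAddCommGroup E] [InnerProductSpace ℝ E]
    {v x : E} {a m R : ℝ} (hma : m ≤ a) (hnear : ⟪v, x⟫ ≤ -m * ‖x‖ ^ 2)
    (hfar : R < ‖x‖ → ⟪v, x⟫ ≤ -a * ‖x‖ ^ 2) :
    ⟪v, x⟫ ≤ -a * ‖x‖ ^ 2 + R ^ 2 * (a - m) := by
  rcases le_or_gt ‖x‖ R with hx | hx
  · have : ‖x‖ ^ 2 ≤ R ^ 2 := pow_le_pow_left₀ (norm_nonneg x) hx 2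
    nlinarith
  · nlinarith [hfar hx, sq_nonneg R]

/-- Proposition 15 computation: Foster–Lyapunov drift inequality for
one Euler–Maruyama step with `V(x) = 1 + ‖x‖²`. -/
theorem euler_step_drift (d : ℕ)
    (b : EuclideanSpace ℝ (Fin d) → EuclideanSpace ℝ (Fin d))
    (L m2 m R2 γ : ℝ)
    (hL : ∀ x y, ‖b x - b y‖ ≤ L * ‖x - y‖) (hb0 : b 0 = 0)
    (hm2 : 0 < m2)
    (hC2 : ∀ x : EuclideanSpace ℝ (Fin d), R2 < ‖x‖ → ⟪b x, x⟫ ≤ -m2 * ‖x‖ ^ 2)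
    (hm : m ≤ 0)
    (hmono : ∀ x y, ⟪b x - b y, x - y⟫ ≤ -m * ‖x - y‖ ^ 2)
    (hγ : γ ∈ Set.Ioo (0:ℝ) (2 * m2 / L ^ 2)) :
    ∀ x : EuclideanSpace ℝ (Fin d),
      (∫ z, (1 + ‖x + γ • b x + Real.sqrt γ • z‖ ^ 2) ∂(stdGaussian d))
        ≤ (1 - γ * (2 * m2 - γ * L ^ 2)) * (1 + ‖x‖ ^ 2)
            + γ * ((d : ℝ) + 2 * R2 ^ 2 * (m2 - m) + 2 * m2) := by
  intro x
  have hγ0 : 0 ≤ γ := hγ.1.le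
  have hlip : ‖b x‖ ≤ L * ‖x‖ := by simpa [hb0] using hL x 0
  have hdrift : ⟪b x, x⟫ ≤ -m2 * ‖x‖ ^ 2 + R2 ^ 2 * (m2 - m) :=
    inner_le_neg_mul_norm_sq_add (by linarith) (by simpa [hb0] using hmono x 0) (hC2 x)
  have hstep : ‖x + γ • b x‖ ^ 2 = ‖x‖ ^ 2 + 2 * γ * ⟪b x, x⟫ + γ ^ 2 * ‖b x‖ ^ 2 := by
    rw [norm_add_sq_real, inner_smul_right, real_inner_comm, norm_smul, mul_pow,
      Real.norm_eq_abs, sq_abs, mul_assoc]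
  rw [integral_one_add_norm_add_smul_sq_stdGaussian, Real.sq_sqrt hγ0, hstep]
  have hlip2 : ‖b x‖ ^ 2 ≤ (L * ‖x‖) ^ 2 := pow_le_pow_left₀ (norm_nonneg _) hlip 2
  nlinarith [mul_le_mul_of_nonneg_left hdrift hγ0, mul_le_mul_of_nonneg_left hlip2 (sq_nonneg γ),
    sq_nonneg (γ * L)]
end
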